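/- Fix k ≥ 2, let Z be an abelian group and A ⊆ Z a nonempty finite subset. Let F be the free abelian group on the set A with canonical generators e_a, let X be the subgroup of F generated by all elements e_{a₁} + ⋯ + e_{a_k} − e_{a₁'} − ⋯ − e_{a_k'} for a₁,…,a_k,a₁',…,a_k' ∈ A with a₁ + ⋯ + a_k = a₁' + ⋯ + a_k' in Z, let Z' = F/X, ι : A → Z' the map sending a to the class of e_a, and A' = ι(A). Then for every abelian group W, every subset B ⊆ W, and every function f : Z' → W, f is a Freiman homomorphism of order k from A' to B if and only if f ∘ ι is a Freiman homomorphism of order k from A to B. In particular, precomposition with ι gives a bijection between Freiman homomorphisms of order k from A' to B and Freiman homomorphisms of order k from A to B. -/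

import Mathlib

/-- A function `f : Z → W` is a Freiman homomorphism of order `k` from `A ⊆ Z` to `B ⊆ W`
if it maps `A` into `B` and preserves equality of `k`-fold sums of elements of `A`. -/
def IsFreimanHomOn {Z W : Type*} [AddCommMonoid Z] [AddCommMonoid W]
    (k : ℕ) (A : Set Z) (B : Set W) (f : Z → W) : Prop :=
  Set.MapsTo f A B ∧
    ∀ s t : Fin k → Z, (∀ i, s i ∈ A) → (∀ i, t i ∈ A) →
      (∑ i, s i) = (∑ i, t i) → (∑ i, f (s i)) = (∑ i, f (t i))

/-- The subgroup of relations in the free abelian group on `A`: it is generated by the elements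
`e_{a₁} + ⋯ + e_{a_k} − e_{a₁'} − ⋯ − e_{a_k'}` for tuples of elements of `A` with
`a₁ + ⋯ + a_k = a₁' + ⋯ + a_k'` in `Z`. -/
def freimanRelations (k : ℕ) {Z : Type*} [AddCommGroup Z] (A : Set Z) :
    AddSubgroup (FreeAbelianGroup ↥A) :=
  AddSubgroup.closure
    {x | ∃ s t : Fin k → ↥A,
      (∑ i, (s i : Z)) = (∑ i, (t i : Z)) ∧
      x = (∑ i, FreeAbelianGroup.of (s i)) - (∑ i, FreeAbelianGroup.of (t i))}

/-- The universal ambient group `Z' = F/X` of Konyagin and Lev. -/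
def universalAmbientGroup (k : ℕ) {Z : Type*} [AddCommGroup Z] (A : Set Z) : Type _ :=
  FreeAbelianGroup ↥A ⧸ freimanRelations k A

noncomputable instance (k : ℕ) {Z : Type*} [AddCommGroup Z] (A : Set Z) :
    AddCommGroup (universalAmbientGroup k A) :=
  QuotientAddGroup.Quotient.addCommGroup (freimanRelations k A)

/-- The canonical map `ι : A → Z'` sending `a` to the class of `e_a`. -/
def universalEmbedding (k : ℕ) {Z : Type*} [AddCommGroup Z] (A : Set Z) :
    ↥A → universalAmbientGroup k A :=
  fun a => QuotientAddGroup.mk (FreeAbelianGroup.of a)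

section Aux

variable {Z : Type*} [AddCommGroup Z] (k : ℕ) (A : Set Z)

/-- The quotient map as an additive hom. -/
noncomputable def uagMk : FreeAbelianGroup ↥A →+ universalAmbientGroup k A :=
  QuotientAddGroup.mk' (freimanRelations k A)

lemma uagMk_of (a : ↥A) : uagMk k A (FreeAbelianGroup.of a) = universalEmbedding k A a := rfl

lemma freimanRelations_le_ker :
    freimanRelations k A ≤ (FreeAbelianGroup.lift (Subtype.val : ↥A → Z)).ker := by
  rw [freimanRelations, AddSubgroup.closure_le]
  rintro x ⟨s, t, hst, rfl⟩
  simp only [SetLike.mem_coe, AddMonoidHom.mem_ker, map_sub, map_sum,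
    FreeAbelianGroup.lift_apply_of]
  rw [hst, sub_self]

end Aux

theorem universal_ambient_group_precomposition
    {Z : Type*} [AddCommGroup Z] (k : ℕ) (hk : 2 ≤ k)
    (A : Set Z) (hAne : A.Nonempty) (hAfin : A.Finite)
    (W : Type*) [AddCommGroup W] (B : Set W)
    (f : universalAmbientGroup k A → W) (g : Z → W)
    (hfg : ∀ a : ↥A, g a = f (universalEmbedding k A a)) :
    IsFreimanHomOn k (Set.range (universalEmbedding k A)) B f ↔
      IsFreimanHomOn k A B g := by
  constructor
  · rintro ⟨hmap, hsum⟩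
    constructor
    · intro a ha
      rw [show a = ((⟨a, ha⟩ : ↥A) : Z) from rfl, hfg]
      exact hmap ⟨_, rfl⟩
    · intro s t hs ht hsum'
      set s' : Fin k → ↥A := fun i => ⟨s i, hs i⟩ with hs'
      set t' : Fin k → ↥A := fun i => ⟨t i, ht i⟩ with ht'
      have key : (∑ i, universalEmbedding k A (s' i)) = ∑ i, universalEmbedding k A (t' i) := by
        simp only [← uagMk_of, ← map_sum]
        show QuotientAddGroup.mk _ = QuotientAddGroup.mk _
        rw [QuotientAddGroup.eq]
        have : (∑ i, FreeAbelianGroup.of (t' i)) - (∑ i, FreeAbelianGroup.of (s' i)) ∈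
            freimanRelations k A := by
          apply AddSubgroup.subset_closure
          exact ⟨t', s', hsum'.symm, rfl⟩
        rw [neg_add_eq_sub]; exact this
      have := hsum (fun i => universalEmbedding k A (s' i))
        (fun i => universalEmbedding k A (t' i))
        (fun i => ⟨_, rfl⟩) (fun i => ⟨_, rfl⟩) key
      calc ∑ i, g (s i) = ∑ i, f (universalEmbedding k A (s' i)) := by
              refine Finset.sum_congr rfl fun i _ => ?_
              rw [show s i = ((s' i : Z)) from rfl, hfg]
        _ = ∑ i, f (universalEmbedding k A (t' i)) := this
        _ = ∑ i, g (t i) := by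
              refine Finset.sum_congr rfl fun i _ => ?_
              rw [show t i = ((t' i : Z)) from rfl, hfg]
  · rintro ⟨hmap, hsum⟩
    constructor
    · rintro x ⟨a, rfl⟩
      rw [← hfg]
      exact hmap a.2
    · intro s t hs ht hsum'
      choose a ha using hs
      choose b hb using ht
      have hmem : (∑ i, FreeAbelianGroup.of (a i)) - (∑ i, FreeAbelianGroup.of (b i)) ∈
          freimanRelations k A := by
        have : (uagMk k A) (∑ i, FreeAbelianGroup.of (a i)) =
            (uagMk k A) (∑ i, FreeAbelianGroup.of (b i)) := by
          simp only [map_sum, uagMk_of]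
          simp only [ha, hb]
          exact hsum'
        have h2 := QuotientAddGroup.eq.mp this
        have := neg_mem h2
        rwa [neg_add_eq_sub, neg_sub] at this
      have hZ : (∑ i, ((a i : Z))) = ∑ i, ((b i : Z)) := by
        have := freimanRelations_le_ker k A hmem
        simp only [AddMonoidHom.mem_ker, map_sub, map_sum, FreeAbelianGroup.lift_apply_of,
          sub_eq_zero] at this
        exact this
      have := hsum (fun i => (a i : Z)) (fun i => (b i : Z))
        (fun i => (a i).2) (fun i => (b i).2) hZ
      simp only [hfg] at this
      calc ∑ i, f (s i) = ∑ i, f (universalEmbedding k A (a i)) := by simp [ha]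
        _ = ∑ i, f (universalEmbedding k A (b i)) := this
        _ = ∑ i, f (t i) := by simp [hb]
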